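/- arXiv:2403.04119 — 2 statements merged into one kernel-verified Lean document; each statement's English description precedes it below -/
import Mathlib

section
/- Let r ≥ 1 and let c ≥ 1 be an integer. Let ψ : F → ℂ^× be an additive character with ψ(O) = {1} and ψ(𝔭^{-1}) ≠ {1}, extended to the upper unipotent group N_{r+1} ⊂ GL_{r+1}(F) by ψ(n) = ∏_{i=1}^{r} ψ(n_{i,i+1}), and let ω : F^× → ℂ^× be a group homomorphism. Suppose W : GL_{r+1}(F) → ℂ satisfies W(n·g) = ψ(n)·W(g) for all n ∈ N_{r+1}, and W(g·k) = ω(k_{r+1,r+1})·W(g) for all k ∈ Γ_{r+1}(c). Then for every f ∈ ℤ^r that does NOT satisfy f_1 ≥ f_2 ≥ … ≥ f_r ≥ 0, one has W(diag(ϖ^{f_1},…,ϖ^{f_r},1)) = 0. -/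
/-!
Put `e = (f, 0) ∈ ℤ^{r+1}` and `t = diag(ϖ^e)`. If `f` is not dominant, then `e_i < e_{i+1}` for
some `i`. Take `x` with `ψ x ≠ 1` and `x ϖ ∈ O`, and let `n = 1 + x E_{i,i+1} ∈ N_{r+1}`. Then
`t⁻¹ n t = 1 + x ϖ^{e_{i+1} - e_i} E_{i,i+1}` is integral, unipotent and has zero last row off the
diagonal, so it lies in `Γ_{r+1}(c)` with corner entry `1`. Hence
`ψ(x) W(t) = W(n t) = W(t · t⁻¹ n t) = W(t)`, and `W(t) = 0`.
-/

open Matrix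

namespace ShalikaStmt14

variable {O F : Type*} [CommRing O] [IsDomain O] [IsDiscreteValuationRing O]
  [Field F] [Algebra O F] [IsFractionRing O F]

def IsInt (O : Type*) {F : Type*} [CommRing O] [Field F] [Algebra O F] (x : F) : Prop :=
  ∃ a : O, algebraMap O F a = x

/-- The upper triangular unipotent subgroup `N_{r+1} ⊂ GL_{r+1}(F)`. -/
def Nset (F : Type*) [Field F] (r : ℕ) : Set (Matrix (Fin (r + 1)) (Fin (r + 1)) F) :=
  {n | (∀ i j : Fin (r + 1), j < i → n i j = 0) ∧ ∀ i : Fin (r + 1), n i i = 1}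

/-- `Γ_{r+1}(c) = {k ∈ GL_{r+1}(O) : k_{r+1,1}, …, k_{r+1,r} ∈ 𝔭^c}`. -/
def Gammaset (O : Type*) (F : Type*) [CommRing O] [Field F] [Algebra O F]
    (ϖ : O) (r c : ℕ) : Set (Matrix (Fin (r + 1)) (Fin (r + 1)) F) :=
  {k | (∀ i j, IsInt O (k i j)) ∧ (∃ u : Oˣ, algebraMap O F (u : O) = k.det) ∧
    ∀ j : Fin (r + 1), (j : ℕ) < r →
      ∃ a : O, algebraMap O F (ϖ ^ c * a) = k (Fin.last r) j}

theorem _root_.Fin.antitone_snoc_iff {α : Type*} [Preorder α] {n : ℕ} {f : Fin n → α} {a : α} :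
    Antitone (Fin.snoc f a : Fin (n + 1) → α) ↔ Antitone f ∧ ∀ i, a ≤ f i := by
  refine ⟨fun h => ⟨fun i j hij => ?_, fun i => ?_⟩, fun ⟨hf, ha⟩ p q hpq => ?_⟩
  · simpa using h (Fin.castSucc_le_castSucc_iff.2 hij)
  · simpa using h (Fin.castSucc_lt_last i).le
  · induction q using Fin.lastCases with
    | last => induction p using Fin.lastCases <;> simp [ha]
    | cast q =>
      obtain ⟨p, rfl⟩ := Fin.exists_castSucc_eq.2 (hpq.trans_lt (Fin.castSucc_lt_last q)).ne
      simpa using hf (Fin.castSucc_le_castSucc_iff.1 hpq)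

section Transvection

variable {n R : Type*} [Fintype n] [DecidableEq n] [CommRing R]

theorem transvection_mul_diagonal {i j : n} (d : n → R) {x y : R} (h : x * d j = d i * y) :
    transvection i j x * diagonal d = diagonal d * transvection i j y := by
  ext p q
  rw [mul_diagonal, diagonal_mul]
  simp only [transvection, Matrix.add_apply, one_apply, single_apply]
  split_ifs <;> simp_all [add_mul, mul_add]

theorem transvection_castSucc_succ_apply {r : ℕ} (i j : Fin r) (x : R) :
    transvection i.castSucc i.succ x j.castSucc j.succ = (Pi.single i x : Fin r → R) j := by
  by_cases h : j = i
  · subst h; simp [transvection, (Fin.castSucc_lt_succ (i := j)).ne]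
  · simp [transvection, (Fin.castSucc_lt_succ (i := j)).ne, h, Ne.symm h]

theorem prod_addChar_transvection_castSucc_succ {M : Type*} [CommMonoid M] (ψ : AddChar R M)
    {r : ℕ} (i : Fin r) (x : R) :
    ∏ j : Fin r, ψ (transvection i.castSucc i.succ x j.castSucc j.succ) = ψ x := by
  simp_rw [transvection_castSucc_succ_apply]
  rw [Fintype.prod_eq_single i fun j hj => by simp [hj]]
  simp

end Transvection

theorem transvection_mem_Nset {r : ℕ} {i j : Fin (r + 1)} (hij : i < j) (x : F) :
    transvection i j x ∈ Nset F r := by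
  refine ⟨fun p q hqp => ?_, fun p => ?_⟩
  · simp [transvection, single_apply, hqp.ne']
    omega
  · simp [transvection, single_apply]
    omega

theorem transvection_mem_Gammaset {R K : Type*} [CommRing R] [Field K] [Algebra R K] (ϖ : R)
    {r : ℕ} (c : ℕ) {i j : Fin (r + 1)} (hij : i ≠ j) (hi : i ≠ Fin.last r) {y : K}
    (hy : IsInt R y) : transvection i j y ∈ Gammaset R K ϖ r c := by
  refine ⟨fun p q => ?_, ⟨1, by simp [hij]⟩, fun q hq => ⟨0, ?_⟩⟩
  · by_cases hpq : i = p ∧ j = q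
    · obtain ⟨rfl, rfl⟩ := hpq
      simpa [transvection, one_apply, hij] using hy
    · refine ⟨if p = q then 1 else 0, ?_⟩
      simp only [transvection, Matrix.add_apply, one_apply, single_apply, hpq, if_false, add_zero]
      split_ifs <;> simp
  · have hq : Fin.last r ≠ q := fun h => by simp [← h] at hq
    simp [transvection, hq, hi]

theorem apply_mul_eq_of_mem_Gammaset {R K : Type*} [CommRing R] [Field K] [Algebra R K]
    {ϖ : R} {r c : ℕ} {ω : Kˣ →* ℂˣ} {W : Matrix (Fin (r + 1)) (Fin (r + 1)) K → ℂ}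
    (hW : ∀ g k : Matrix (Fin (r + 1)) (Fin (r + 1)) K, IsUnit g.det →
      k ∈ Gammaset R K ϖ r c → ∀ hu : IsUnit (k (Fin.last r) (Fin.last r)),
      W (g * k) = (ω hu.unit : ℂ) * W g)
    {g k : Matrix (Fin (r + 1)) (Fin (r + 1)) K} (hg : IsUnit g.det) (hk : k ∈ Gammaset R K ϖ r c)
    (hk1 : k (Fin.last r) (Fin.last r) = 1) : W (g * k) = W g := by
  have hu : IsUnit (k (Fin.last r) (Fin.last r)) := hk1 ▸ isUnit_one
  rw [hW g k hg hk hu, show hu.unit = 1 from Units.ext hk1, map_one, Units.val_one, one_mul]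

theorem apply_diagonal_zpow_eq_zero {R K : Type*} [CommRing R] [Field K] [Algebra R K]
    {ϖ : R} (hϖ : algebraMap R K ϖ ≠ 0) {r c : ℕ} {ψ : AddChar K ℂ} {x : K}
    (hxϖ : IsInt R (x * algebraMap R K ϖ)) (hx : ψ x ≠ 1) {ω : Kˣ →* ℂˣ}
    {W : Matrix (Fin (r + 1)) (Fin (r + 1)) K → ℂ}
    (hW1 : ∀ nn g : Matrix (Fin (r + 1)) (Fin (r + 1)) K, nn ∈ Nset K r → IsUnit g.det →
      W (nn * g) = (∏ i : Fin r, ψ (nn i.castSucc i.succ)) * W g)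
    (hW2 : ∀ g k : Matrix (Fin (r + 1)) (Fin (r + 1)) K, IsUnit g.det →
      k ∈ Gammaset R K ϖ r c → ∀ hu : IsUnit (k (Fin.last r) (Fin.last r)),
      W (g * k) = (ω hu.unit : ℂ) * W g)
    {e : Fin (r + 1) → ℤ} {i : Fin r} (hi : e i.castSucc < e i.succ) :
    W (diagonal fun j => algebraMap R K ϖ ^ e j) = 0 := by
  obtain ⟨a, ha⟩ := hxϖ
  obtain ⟨m, hm⟩ : ∃ m : ℕ, e i.succ = e i.castSucc + m + 1 :=
    ⟨(e i.succ - e i.castSucc - 1).toNat, by omega⟩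
  set t := diagonal fun j => algebraMap R K ϖ ^ e j
  have ht : IsUnit t.det := by
    simpa [t, det_diagonal, Finset.prod_ne_zero_iff] using fun j => zpow_ne_zero (e j) hϖ
  have hconj : transvection i.castSucc i.succ x * t =
      t * transvection i.castSucc i.succ (algebraMap R K (a * ϖ ^ m)) :=
    transvection_mul_diagonal _ (by
      rw [hm, zpow_add₀ hϖ, zpow_add₀ hϖ, map_mul, ha, map_pow, zpow_natCast, zpow_one]; ring)
  have hleft : W (transvection i.castSucc i.succ x * t) = ψ x * W t := by
    rw [hW1 _ t (transvection_mem_Nset Fin.castSucc_lt_succ x) ht,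
      prod_addChar_transvection_castSucc_succ]
  have hright : W (t * transvection i.castSucc i.succ (algebraMap R K (a * ϖ ^ m))) = W t :=
    apply_mul_eq_of_mem_Gammaset hW2 ht
      (transvection_mem_Gammaset ϖ c Fin.castSucc_lt_succ.ne (Fin.castSucc_lt_last i).ne ⟨_, rfl⟩)
      (by simp [transvection, (Fin.castSucc_lt_last i).ne])
  have hfixed : ψ x * W t = W t := by rw [← hleft, hconj, hright]
  by_contra h
  exact hx ((mul_eq_right₀ h).1 hfixed)

theorem stmt14_general (ϖ : O) (hϖ : Irreducible ϖ) (r c : ℕ)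
    (ψ : AddChar F ℂ)
    (hψ2 : ∃ x : F, IsInt O (x * algebraMap O F ϖ) ∧ ψ x ≠ 1)
    (ω : Fˣ →* ℂˣ)
    (W : Matrix (Fin (r + 1)) (Fin (r + 1)) F → ℂ)
    (hW1 : ∀ nn g : Matrix (Fin (r + 1)) (Fin (r + 1)) F, nn ∈ Nset F r → IsUnit g.det →
      W (nn * g) = (∏ i : Fin r, ψ (nn i.castSucc i.succ)) * W g)
    (hW2 : ∀ g k : Matrix (Fin (r + 1)) (Fin (r + 1)) F, IsUnit g.det →
      k ∈ Gammaset O F ϖ r c → ∀ hu : IsUnit (k (Fin.last r) (Fin.last r)),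
      W (g * k) = (ω hu.unit : ℂ) * W g) :
    ∀ f : Fin r → ℤ,
      ¬ ((∀ i j : Fin r, i ≤ j → f j ≤ f i) ∧ ∀ i : Fin r, 0 ≤ f i) →
      W (diagonal (Fin.snoc (fun i : Fin r => (algebraMap O F ϖ) ^ f i) 1)) = 0 := by
  intro f hf
  obtain ⟨x, hxϖ, hx⟩ := hψ2
  have hϖ0 : algebraMap O F ϖ ≠ 0 :=
    (map_ne_zero_iff _ (IsFractionRing.injective O F)).2 hϖ.ne_zero
  set e : Fin (r + 1) → ℤ := Fin.snoc f 0
  obtain ⟨i, hi⟩ : ∃ i : Fin r, e i.castSucc < e i.succ := by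
    by_contra! h
    exact hf (Fin.antitone_snoc_iff.1 (Fin.antitone_iff_succ_le.2 h))
  have hvanish := apply_diagonal_zpow_eq_zero hϖ0 hxϖ hx hW1 hW2 hi
  have hsnoc : (Fin.snoc (fun i => algebraMap O F ϖ ^ f i) 1 : Fin (r + 1) → F) =
      fun j => algebraMap O F ϖ ^ e j := by
    rw [← zpow_zero (algebraMap O F ϖ)]
    exact (Fin.comp_snoc (algebraMap O F ϖ ^ ·) f 0).symm
  rwa [hsnoc]

/-- If `W` on `GL_{r+1}(F)` transforms on the left under `N_{r+1}` by `ψ` (extended by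
`ψ(n) = ∏ ψ(n_{i,i+1})`) and on the right under `Γ_{r+1}(c)` by `ω(k_{r+1,r+1})`, where `ψ` is
trivial on `O` but not on `𝔭⁻¹` and `c ≥ 1`, then `W(diag(ϖ^{f_1},…,ϖ^{f_r},1)) = 0`
for every `f ∈ ℤ^r` that is not decreasing with nonnegative entries. -/
theorem stmt14 (ϖ : O) (hϖ : Irreducible ϖ) (r c : ℕ) (hr : 0 < r) (hc : 0 < c)
    (ψ : AddChar F ℂ)
    (hψ1 : ∀ a : O, ψ (algebraMap O F a) = 1)
    (hψ2 : ∃ x : F, IsInt O (x * algebraMap O F ϖ) ∧ ψ x ≠ 1)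
    (ω : Fˣ →* ℂˣ)
    (W : Matrix (Fin (r + 1)) (Fin (r + 1)) F → ℂ)
    (hW1 : ∀ nn g : Matrix (Fin (r + 1)) (Fin (r + 1)) F, nn ∈ Nset F r → IsUnit g.det →
      W (nn * g) = (∏ i : Fin r, ψ (nn i.castSucc i.succ)) * W g)
    (hW2 : ∀ g k : Matrix (Fin (r + 1)) (Fin (r + 1)) F, IsUnit g.det →
      k ∈ Gammaset O F ϖ r c → ∀ hu : IsUnit (k (Fin.last r) (Fin.last r)),
      W (g * k) = (ω hu.unit : ℂ) * W g) :
    ∀ f : Fin r → ℤ,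
      ¬ ((∀ i j : Fin r, i ≤ j → f j ≤ f i) ∧ ∀ i : Fin r, 0 ≤ f i) →
      W (diagonal (Fin.snoc (fun i : Fin r => (algebraMap O F ϖ) ^ f i) 1)) = 0 :=
  stmt14_general ϖ hϖ r c ψ hψ2 ω W hW1 hW2

end ShalikaStmt14
end

section
/- Let n = 2m be even and l a positive integer. Let p ∈ GL_{n+2}(F) be of the form [[A, b, c],[0, t, z],[0, 0, 1]] (blocks of sizes n, 1, 1), where A ∈ GL_n(F), b, c are column vectors in F^n, z ∈ F, and t ∈ F^× with t ∉ O^×. Then p does not belong to the set {diag(g,1,1)·u·k : g ∈ P_n, u ∈ U, k ∈ C_{n+2}(l)}, where U is the group of matrices [[1_n, xᵀ, yᵀ],[0,1,w],[0,0,1]] with x, y ∈ F^n, w ∈ F. -/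
open Matrix

namespace ShalikaStmt15

variable {O F : Type*} [CommRing O] [IsDomain O] [IsDiscreteValuationRing O]
  [Field F] [Algebra O F] [IsFractionRing O F]

/-- `x ∈ F` lies in (the image of) `O`. -/
def IsInt (O : Type*) {F : Type*} [CommRing O] [Field F] [Algebra O F] (x : F) : Prop :=
  ∃ a : O, algebraMap O F a = x

/-- The mirabolic subgroup `P_N ⊂ GL_N(F)`: invertible matrices with last row `(0,…,0,1)`. -/
def Pset (F : Type*) [Field F] (N : ℕ) : Set (Matrix (Fin N) (Fin N) F) :=
  {p | IsUnit p.det ∧ ∀ i j : Fin N, (i : ℕ) = N - 1 →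
    p i j = if (j : ℕ) = N - 1 then 1 else 0}

/-- `P_N(O) = P_N ∩ GL_N(O)`. -/
def POset (O : Type*) (F : Type*) [CommRing O] [Field F] [Algebra O F] (N : ℕ) :
    Set (Matrix (Fin N) (Fin N) F) :=
  {p | p ∈ Pset F N ∧ (∀ i j, IsInt O (p i j)) ∧ ∃ u : Oˣ, algebraMap O F (u : O) = p.det}

/-- `C_N(l) = {p ∈ P_N(O) : p ≡ 1_N (mod 𝔭^l)}`. -/
def Cset (O : Type*) (F : Type*) [CommRing O] [Field F] [Algebra O F]
    (ϖ : O) (N l : ℕ) : Set (Matrix (Fin N) (Fin N) F) :=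
  {p | p ∈ POset O F N ∧ ∀ i j : Fin N,
    ∃ a : O, algebraMap O F (ϖ ^ l * a) = p i j - (if i = j then 1 else 0)}

/-- The unipotent matrix `[[1_n, xᵀ, yᵀ],[0,1,z],[0,0,1]]` of size `(n+2) × (n+2)`. -/
def bigU {F : Type*} [Field F] (n : ℕ) (x y : Fin n → F) (z : F) :
    Matrix (Fin (n + 2)) (Fin (n + 2)) F :=
  Matrix.of fun i j =>
    if i = j then 1
    else if hi : (i : ℕ) < n then
      (if (j : ℕ) = n then x ⟨i, hi⟩ else if (j : ℕ) = n + 1 then y ⟨i, hi⟩ else 0)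
    else if (i : ℕ) = n ∧ (j : ℕ) = n + 1 then z else 0

/-- The embedding `g ↦ diag(g, 1, 1)` of `n × n` matrices into `(n+2) × (n+2)` matrices. -/
def embed2 {F : Type*} [Field F] (n : ℕ) (g : Matrix (Fin n) (Fin n) F) :
    Matrix (Fin (n + 2)) (Fin (n + 2)) F :=
  Matrix.of fun i j =>
    if hi : (i : ℕ) < n then (if hj : (j : ℕ) < n then g ⟨i, hi⟩ ⟨j, hj⟩ else 0)
    else if (i : ℕ) = (j : ℕ) then 1 else 0

/-- The matrix `[[A, b, c],[0, t, z],[0, 0, 1]]` (blocks of sizes `n`, `1`, `1`). -/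
def pMat {F : Type*} [Field F] (n : ℕ) (A : Matrix (Fin n) (Fin n) F)
    (b c : Fin n → F) (t z : F) : Matrix (Fin (n + 2)) (Fin (n + 2)) F :=
  Matrix.of fun i j =>
    if hi : (i : ℕ) < n then
      (if hj : (j : ℕ) < n then A ⟨i, hi⟩ ⟨j, hj⟩
       else if (j : ℕ) = n then b ⟨i, hi⟩ else c ⟨i, hi⟩)
    else if (i : ℕ) = n then (if (j : ℕ) < n then 0 else if (j : ℕ) = n then t else z)
    else (if (j : ℕ) = n + 1 then 1 else 0)

section

variable {K : Type*} [Field K] {n : ℕ}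

theorem embed2_row_of_le (g : Matrix (Fin n) (Fin n) K) {i : Fin (n + 2)} (hi : n ≤ i) :
    embed2 n g i = Pi.single i 1 := by
  ext j
  simp only [embed2, Matrix.of_apply, dif_neg (not_lt.2 hi), Pi.single_apply, Fin.ext_iff,
    eq_comm (a := (j : ℕ))]

theorem bigU_row_last (x y : Fin n → K) (w : K) :
    bigU n x y w (Fin.last (n + 1)) = Pi.single (Fin.last (n + 1)) 1 := by
  ext j
  simp only [bigU, Matrix.of_apply, Pi.single_apply, Fin.ext_iff, Fin.val_last]
  split_ifs <;> first | rfl | omega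

theorem bigU_row_castSucc_last (x y : Fin n → K) (w : K) :
    bigU n x y w (Fin.last n).castSucc =
      Pi.single (Fin.last n).castSucc 1 + Pi.single (Fin.last (n + 1)) w := by
  ext j
  simp only [bigU, Matrix.of_apply, Pi.add_apply, Pi.single_apply, Fin.ext_iff,
    Fin.val_last, Fin.val_castSucc, true_and]
  split_ifs <;> first | omega | simp

theorem pMat_last_castSucc_last (A : Matrix (Fin n) (Fin n) K) (b c : Fin n → K) (t z : K) :
    pMat n A b c t z (Fin.last (n + 1)) (Fin.last n).castSucc = 0 := by
  simp only [pMat, Matrix.of_apply, Fin.val_last, Fin.val_castSucc]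
  split_ifs <;> first | rfl | omega

theorem pMat_castSucc_last_castSucc_last (A : Matrix (Fin n) (Fin n) K) (b c : Fin n → K)
    (t z : K) : pMat n A b c t z (Fin.last n).castSucc (Fin.last n).castSucc = t := by
  simp only [pMat, Matrix.of_apply, Fin.val_last, Fin.val_castSucc]
  split_ifs <;> first | rfl | omega

theorem mul_apply_of_row_eq_single {m : Type*} [Fintype m] [DecidableEq m]
    {P M : Matrix m m K} {i i' : m} {a : K} (hP : P i = Pi.single i' a) (j : m) :
    (P * M) i j = a * M i' j := by
  rw [Matrix.mul_apply', hP, single_dotProduct]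

/-- Rows `n` and `n + 1` of `diag(g, 1, 1) · u` are `e_n + w e_{n+1}` and `e_{n+1}`, so entries
`(n + 1, n)` and `(n, n)` of the equation give `k (n+1) n = 0` and `t = k n n + w * k (n+1) n`. -/
theorem eq_apply_of_pMat_eq_embed2_mul_bigU_mul {A g : Matrix (Fin n) (Fin n) K}
    {b c x y : Fin n → K} {t z w : K} {k : Matrix (Fin (n + 2)) (Fin (n + 2)) K}
    (h : pMat n A b c t z = embed2 n g * bigU n x y w * k) :
    t = k (Fin.last n).castSucc (Fin.last n).castSucc := by
  set i : Fin (n + 2) := (Fin.last n).castSucc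
  set i' : Fin (n + 2) := Fin.last (n + 1)
  have hrow : ∀ r : Fin (n + 2), n ≤ r → ∀ j,
      pMat n A b c t z r j = (bigU n x y w * k) r j := by
    intro r hr j
    rw [h, Matrix.mul_assoc, mul_apply_of_row_eq_single (embed2_row_of_le g hr), one_mul]
  have hk : k i' i = 0 := by
    rw [← pMat_last_castSucc_last A b c t z,
      hrow i' (by simp [i']) i, mul_apply_of_row_eq_single (bigU_row_last x y w), one_mul]
  rw [← pMat_castSucc_last_castSucc_last A b c t z, hrow i (by simp [i]) i,
    Matrix.mul_apply', bigU_row_castSucc_last, add_dotProduct,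
    single_dotProduct, single_dotProduct, one_mul]
  change k i i + w * k i' i = k i i
  rw [hk, mul_zero, add_zero]

end

theorem exists_unit_algebraMap_eq_of_mem_Cset {R K : Type*} [CommRing R] [IsLocalRing R]
    [Field K] [Algebra R K] {ϖ : R} (hϖ : ϖ ∈ IsLocalRing.maximalIdeal R) {N l : ℕ}
    (hl : 0 < l) {k : Matrix (Fin N) (Fin N) K} (hk : k ∈ Cset R K ϖ N l) (i : Fin N) :
    ∃ u : Rˣ, algebraMap R K u = k i i := by
  obtain ⟨a, ha⟩ := hk.2 i i
  have hmem : -(ϖ ^ l * a) ∈ IsLocalRing.maximalIdeal R :=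
    neg_mem (Ideal.mul_mem_right _ _ (Ideal.pow_mem_of_mem _ hϖ l hl))
  obtain ⟨u, hu⟩ := IsLocalRing.isUnit_one_sub_self_of_mem_nonunits _
    ((IsLocalRing.mem_maximalIdeal _).1 hmem)
  refine ⟨u, ?_⟩
  rw [hu, sub_neg_eq_add, map_add, ha, if_pos rfl, map_one, add_sub_cancel]

theorem stmt15_general (ϖ : O) (hϖ : Irreducible ϖ) (m' l : ℕ) (hl : 0 < l)
    (A : Matrix (Fin ((m' + 1) + (m' + 1))) (Fin ((m' + 1) + (m' + 1))) F)
    (b c : Fin ((m' + 1) + (m' + 1)) → F) (t z : F)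
    (htu : ¬ ∃ u : Oˣ, algebraMap O F (u : O) = t) :
    ¬ ∃ (g : Matrix (Fin ((m' + 1) + (m' + 1))) (Fin ((m' + 1) + (m' + 1))) F)
        (x y : Fin ((m' + 1) + (m' + 1)) → F) (w : F)
        (k : Matrix (Fin (((m' + 1) + (m' + 1)) + 2)) (Fin (((m' + 1) + (m' + 1)) + 2)) F),
        g ∈ Pset F ((m' + 1) + (m' + 1)) ∧
        k ∈ Cset O F ϖ (((m' + 1) + (m' + 1)) + 2) l ∧
        pMat ((m' + 1) + (m' + 1)) A b c t z =
          embed2 ((m' + 1) + (m' + 1)) g * bigU ((m' + 1) + (m' + 1)) x y w * k := by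
  rintro ⟨g, x, y, w, k, -, hk, h⟩
  rw [eq_apply_of_pMat_eq_embed2_mul_bigU_mul h] at htu
  exact htu (exists_unit_algebraMap_eq_of_mem_Cset
    ((IsLocalRing.mem_maximalIdeal _).2 hϖ.not_isUnit) hl hk _)

/-- If `t ∈ F^×` and `t ∉ O^×`, then the matrix `[[A,b,c],[0,t,z],[0,0,1]]` does not lie in
`{diag(g,1,1)·u·k : g ∈ P_n, u ∈ U, k ∈ C_{n+2}(l)}` (here `n = 2m`, `m = m' + 1`). -/
theorem stmt15 (ϖ : O) (hϖ : Irreducible ϖ) (m' l : ℕ) (hl : 0 < l)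
    (A : Matrix (Fin ((m' + 1) + (m' + 1))) (Fin ((m' + 1) + (m' + 1))) F)
    (hA : IsUnit A.det) (b c : Fin ((m' + 1) + (m' + 1)) → F) (t z : F)
    (ht : t ≠ 0) (htu : ¬ ∃ u : Oˣ, algebraMap O F (u : O) = t) :
    ¬ ∃ (g : Matrix (Fin ((m' + 1) + (m' + 1))) (Fin ((m' + 1) + (m' + 1))) F)
        (x y : Fin ((m' + 1) + (m' + 1)) → F) (w : F)
        (k : Matrix (Fin (((m' + 1) + (m' + 1)) + 2)) (Fin (((m' + 1) + (m' + 1)) + 2)) F),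
        g ∈ Pset F ((m' + 1) + (m' + 1)) ∧
        k ∈ Cset O F ϖ (((m' + 1) + (m' + 1)) + 2) l ∧
        pMat ((m' + 1) + (m' + 1)) A b c t z =
          embed2 ((m' + 1) + (m' + 1)) g * bigU ((m' + 1) + (m' + 1)) x y w * k :=
  stmt15_general ϖ hϖ m' l hl A b c t z htu

end ShalikaStmt15
end
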